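/- arXiv:2501.06114 — 9 statements merged into one kernel-verified Lean document; each statement's English description precedes it below -/
import Mathlib

section
/- If f : ℕ → ℕ is strictly increasing and we define f'(0) = 0 and f'(n) = f(n²) for n ≥ 1, then for every infinite set x ⊆ ℕ whose increasing enumeration e satisfies e(n) ≤ f(n) for infinitely many n, there exists an n such that the interval [f'(n), f'(n+1)) contains at least 3 elements of x. -/
/-! If every interval `[f' j, f' (j+1))` held at most two of the `e k`, then the first `n + 1`
values `e 0 < ⋯ < e n` would need about `n / 2` intervals. But whenever `e n ≤ f n`, all of
them lie below `f n < f' (√n + 1)`, i.e. in only `√n + 1` intervals. -/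

theorem ncard_preimage_Iio_le_mul {α : Type*} (e : α → ℕ) (he : Function.Injective e)
    (g : ℕ → ℕ) (hg0 : g 0 = 0) (c : ℕ)
    (hc : ∀ j, (e ⁻¹' Set.Ico (g j) (g (j + 1))).ncard ≤ c) (m : ℕ) :
    (e ⁻¹' Set.Iio (g m)).ncard ≤ c * m := by
  induction m with
  | zero => simp [hg0]
  | succ m ih =>
    have hsplit : e ⁻¹' Set.Iio (g (m + 1)) ⊆
        e ⁻¹' Set.Iio (g m) ∪ e ⁻¹' Set.Ico (g m) (g (m + 1)) := by
      intro k hk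
      by_cases h : e k < g m
      · exact Or.inl h
      · exact Or.inr ⟨not_lt.mp h, hk⟩
    have hfin : ∀ b, (e ⁻¹' Set.Iio b).Finite := fun b =>
      (Set.finite_Iio b).preimage he.injOn
    calc (e ⁻¹' Set.Iio (g (m + 1))).ncard
        ≤ (e ⁻¹' Set.Iio (g m) ∪ e ⁻¹' Set.Ico (g m) (g (m + 1))).ncard :=
          Set.ncard_le_ncard hsplit
            ((hfin _).union ((hfin (g (m + 1))).subset fun k hk => hk.2))
      _ ≤ (e ⁻¹' Set.Iio (g m)).ncard + (e ⁻¹' Set.Ico (g m) (g (m + 1))).ncard :=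
          Set.ncard_union_le _ _
      _ ≤ c * (m + 1) := by rw [mul_add_one]; exact add_le_add ih (hc m)

/-- If `f` is strictly increasing, `f'(0) = 0`, `f'(n) = f(n²)` for `n ≥ 1`, and `e` is the
increasing enumeration of an infinite set with `e(n) ≤ f(n)` infinitely often, then some
interval `[f'(n), f'(n+1))` contains at least 3 elements of the set. -/
theorem stmt_0 (f e : ℕ → ℕ) (hf : StrictMono f) (he : StrictMono e)
    (hinf : {n : ℕ | e n ≤ f n}.Infinite)
    (f' : ℕ → ℕ) (hf'0 : f' 0 = 0) (hf' : ∀ n ≥ 1, f' n = f (n ^ 2)) :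
    ∃ n : ℕ, 3 ≤ {k : ℕ | f' n ≤ e k ∧ e k < f' (n + 1)}.ncard := by
  by_contra! hsmall
  obtain ⟨n, hen : e n ≤ f n, hn⟩ := hinf.exists_gt 8
  set s := Nat.sqrt n
  have hs : 3 ≤ s := Nat.le_sqrt.mpr (by omega)
  have hbelow : Set.Iic n ⊆ e ⁻¹' Set.Iio (f' (s + 1)) := by
    intro k hk
    calc e k ≤ f n := (he.monotone hk).trans hen
      _ < f ((s + 1) ^ 2) := hf (by rw [sq]; exact Nat.lt_succ_sqrt n)
      _ = f' (s + 1) := (hf' (s + 1) (by omega)).symm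
  have hcount : n + 1 ≤ 2 * (s + 1) := by
    calc n + 1 = (Set.Iic n).ncard := by simp
      _ ≤ (e ⁻¹' Set.Iio (f' (s + 1))).ncard :=
          Set.ncard_le_ncard hbelow ((Set.finite_Iio _).preimage he.injective.injOn)
      _ ≤ 2 * (s + 1) :=
          ncard_preimage_Iio_le_mul e he.injective f' hf'0 2
            (fun j => Nat.le_of_lt_succ (hsmall j)) (s + 1)
  nlinarith [Nat.sqrt_le' n]
end

section
/- Fix a dense sequence (s_n) with s_n ∈ {0,1}^n, meaning that for every finite binary string t there exists n with t a proper initial segment of s_n. For each n ≥ 0, define a graph G on {0,1}^{i₀} (for a fixed i₀) by joining u and v iff there exist n < i₀, ε ∈ {0,1}, and c ∈ {0,1}^{i₀-n-1} such that u = s_n ⌢ (ε) ⌢ c and v = s_n ⌢ (1-ε) ⌢ c. Then the graph G is acyclic. -/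
/-!
Call `n` the level of an edge `s_n ⌢ (ε) ⌢ c — s_n ⌢ (!ε) ⌢ c`. On a cycle, let `N` be the
largest level occurring. Edges of level `≤ N` fix every entry beyond position `N`, so all
vertices of the cycle share one tail `c`, and bit `N` flips exactly along the edges of level `N`;
as the cycle is closed, it has an even, positive number of them. But each of them is the edge
`s_N ⌢ (0) ⌢ c — s_N ⌢ (1) ⌢ c`, and a cycle does not repeat edges.
-/

namespace SimpleGraph.Walk

variable {V : Type*} {G : SimpleGraph V}

theorem even_countP_darts_apply_ne_iff (f : V → Bool) {u v : V} (p : G.Walk u v) :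
    Even (p.darts.countP fun d => f d.fst ≠ f d.snd) ↔ f u = f v := by
  induction p with
  | nil => simp
  | @cons u w v _ q ih =>
    rw [darts_cons, List.countP_cons]
    cases hu : f u <;> cases hw : f w <;> cases hv : f v <;>
      simp_all [Nat.even_add_one]

theorem apply_eq_of_forall_mem_darts {α : Type*} (g : V → α) {u v : V} (p : G.Walk u v)
    (h : ∀ d ∈ p.darts, g d.fst = g d.snd) : ∀ x ∈ p.support, g x = g u := by
  induction p with
  | nil => simp
  | @cons u w v hadj q ih =>
    simp only [darts_cons, List.forall_mem_cons] at h
    rw [support_cons, List.forall_mem_cons]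
    exact ⟨rfl, fun x hx => (ih h.2 x hx).trans h.1.symm⟩

theorem IsTrail.countP_darts_le_one {u v : V} {p : G.Walk u v} (hp : p.IsTrail)
    (P : G.Dart → Bool) (e : Sym2 V) (he : ∀ d ∈ p.darts, P d → d.edge = e) :
    p.darts.countP P ≤ 1 := by
  set L := (p.darts.filter P).map Dart.edge
  have hnodup : L.Nodup := hp.edges_nodup.sublist (List.filter_sublist.map _)
  have hconst : L = List.replicate L.length e := by
    refine List.eq_replicate_iff.2 ⟨rfl, fun e he' => ?_⟩
    obtain ⟨d, hd, rfl⟩ := List.mem_map.1 he'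
    obtain ⟨hd, hPd⟩ := List.mem_filter.1 hd
    exact he d hd hPd
  rw [List.countP_eq_length_filter, ← List.length_map Dart.edge]
  exact List.nodup_replicate.1 (hconst ▸ hnodup)

end SimpleGraph.Walk

def IsFlipAt (a u v : List Bool) : Prop :=
  ∃ ε c, u = a ++ [ε] ++ c ∧ v = a ++ [!ε] ++ c

namespace IsFlipAt

variable {a u v : List Bool}

theorem drop_eq (h : IsFlipAt a u v) {N : ℕ} (hN : a.length ≤ N) :
    u.drop (N + 1) = v.drop (N + 1) := by
  obtain ⟨ε, c, rfl, rfl⟩ := h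
  obtain ⟨k, rfl⟩ := Nat.exists_eq_add_of_le hN
  rw [add_assoc]
  simp [List.drop_append]

theorem getD_eq (h : IsFlipAt a u v) {N : ℕ} (hN : a.length < N) :
    u.getD N false = v.getD N false := by
  obtain ⟨ε, c, rfl, rfl⟩ := h
  obtain ⟨k, rfl⟩ := Nat.exists_eq_add_of_lt hN
  rw [add_assoc]
  simp [List.getElem?_append_right]

theorem getD_length_ne (h : IsFlipAt a u v) :
    u.getD a.length false ≠ v.getD a.length false := by
  obtain ⟨ε, c, rfl, rfl⟩ := h
  simp

theorem getD_ne_iff (h : IsFlipAt a u v) {N : ℕ} (hN : a.length ≤ N) :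
    u.getD N false ≠ v.getD N false ↔ a.length = N := by
  rcases hN.lt_or_eq with hlt | rfl
  · exact iff_of_false (not_not.2 (h.getD_eq hlt)) hlt.ne
  · exact iff_of_true h.getD_length_ne rfl

theorem sym2_eq (h : IsFlipAt a u v) :
    s(u, v) = s(a ++ [false] ++ u.drop (a.length + 1), a ++ [true] ++ u.drop (a.length + 1)) := by
  obtain ⟨ε, c, rfl, rfl⟩ := h
  cases ε <;> simp [Sym2.eq_swap]

end IsFlipAt

theorem stmt_2_general (s : ℕ → List Bool) (hlen : ∀ n, (s n).length = n)
    (i₀ : ℕ) (G : SimpleGraph {u : List Bool // u.length = i₀})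
    (hG : ∀ u v : {u : List Bool // u.length = i₀}, G.Adj u v ↔
      ∃ n < i₀, ∃ (ε : Bool) (c : List Bool), c.length = i₀ - n - 1 ∧
        u.1 = s n ++ [ε] ++ c ∧ v.1 = s n ++ [!ε] ++ c) :
    G.IsAcyclic := by
  classical
  intro v p hp
  have hflip (d : G.Dart) : ∃ n, IsFlipAt (s n) d.fst.1 d.snd.1 := by
    obtain ⟨n, -, ε, c, -, hu, hv⟩ := (hG _ _).1 d.adj
    exact ⟨n, ε, c, hu, hv⟩
  choose lvl hlvl using hflip
  obtain ⟨d₀, hd₀, hmax⟩ := p.darts.toFinset.exists_max_image lvl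
    (List.toFinset_nonempty_iff _ |>.2 (p.darts_eq_nil.not.2 hp.not_nil))
  simp only [List.mem_toFinset] at hd₀ hmax
  set N := lvl d₀
  have hlvl_le : ∀ d ∈ p.darts, (s (lvl d)).length ≤ N :=
    fun d hd => (hlen _).trans_le (hmax d hd)
  have htail : ∀ x ∈ p.support, x.1.drop (N + 1) = v.1.drop (N + 1) :=
    p.apply_eq_of_forall_mem_darts _ fun d hd => (hlvl d).drop_eq (hlvl_le d hd)
  have heven : Even (p.darts.countP fun d => lvl d = N) := by
    have := (p.even_countP_darts_apply_ne_iff (fun x => x.1.getD N false)).2 rfl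
    rwa [List.countP_congr (q := fun d => lvl d = N) fun d hd => by
      rw [decide_eq_true_eq, decide_eq_true_eq, (hlvl d).getD_ne_iff (hlvl_le d hd), hlen]] at this
  have hedge : ∀ d ∈ p.darts, lvl d = N →
      d.edge.map Subtype.val =
        s(s N ++ [false] ++ v.1.drop (N + 1), s N ++ [true] ++ v.1.drop (N + 1)) := by
    intro d hd hN
    rw [SimpleGraph.Dart.edge, Sym2.map_mk, (hlvl d).sym2_eq, hN, hlen,
      htail _ (p.dart_fst_mem_support_of_mem_darts hd)]
  have hone : p.darts.countP (fun d => lvl d = N) ≤ 1 :=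
    hp.isTrail.countP_darts_le_one _ d₀.edge fun d hd hdN => Sym2.map.injective
      Subtype.val_injective ((hedge d hd (of_decide_eq_true hdN)).trans (hedge d₀ hd₀ rfl).symm)
  have hpos : 0 < p.darts.countP (fun d => lvl d = N) :=
    List.countP_pos_iff.2 ⟨d₀, hd₀, by simp [N]⟩
  exact Nat.not_even_one (by rwa [show p.darts.countP _ = 1 by omega] at heven)

/-- For a dense sequence `s_n ∈ {0,1}^n`, the graph on `{0,1}^{i₀}` joining
`s_n ⌢ (ε) ⌢ c` to `s_n ⌢ (1-ε) ⌢ c` is acyclic. -/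
theorem stmt_2 (s : ℕ → List Bool) (hlen : ∀ n, (s n).length = n)
    (hdense : ∀ t : List Bool, ∃ n, (s n).take t.length = t ∧ t.length < n)
    (i₀ : ℕ) (G : SimpleGraph {u : List Bool // u.length = i₀})
    (hG : ∀ u v : {u : List Bool // u.length = i₀}, G.Adj u v ↔
      ∃ n < i₀, ∃ (ε : Bool) (c : List Bool), c.length = i₀ - n - 1 ∧
        u.1 = s n ++ [ε] ++ c ∧ v.1 = s n ++ [!ε] ++ c) :
    G.IsAcyclic :=
  stmt_2_general s hlen i₀ G hG
end

section
/- Fix a strictly increasing f : ℕ → ℕ, set f'(0)=0 and f'(n)=f(n²) for n ≥ 1, and let A = {x ∈ D_f : the minimal n with x ∩ [f'(n), f'(n+1)) ≠ ∅ satisfies |x ∩ [f'(n), f'(n+1))| = 3}, where D_f = {x ∈ [ℕ]^ℕ : x(n) ≤ f(n) for infinitely many n}. Then for every x ∈ [ℕ]^ℕ, the set A ∩ ran(H_x) is finite, where H_x is defined by H_x(2i) = {x(0),x(1)} ∪ S^{i+2}(x) and H_x(2i+1) = {x(1)} ∪ S^{i+2}(x), with S the shift map. -/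
/-- `[ℕ]^ℕ`: infinite subsets of ℕ, identified with their strictly increasing enumerations. -/
def IncSeq : Type := {x : ℕ → ℕ // StrictMono x}

instance : TopologicalSpace IncSeq := instTopologicalSpaceSubtype

/-- The shift map `S(x) = x \ {min x}`. -/
def Sh (x : IncSeq) : IncSeq :=
  ⟨fun i => x.1 (i + 1), fun a b h => x.2 (by omega)⟩

/-- Index map used to define the hyperedges `H_x`. -/
def idxMap (j : ℕ) : ℕ → ℕ := fun k =>
  if j % 2 = 0 then (if k < 2 then k else j / 2 + k)
  else (if k = 0 then 1 else j / 2 + 1 + k)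

lemma idxMap_strictMono (j : ℕ) : StrictMono (idxMap j) := by
  intro p q h
  unfold idxMap
  split_ifs <;> omega

/-- The hyperedge `H_x`: `H_x(2i) = {x(0),x(1)} ∪ S^{i+2}(x)` and
`H_x(2i+1) = {x(1)} ∪ S^{i+2}(x)`, given by its increasing enumeration. -/
def Hx (x : IncSeq) (j : ℕ) : IncSeq :=
  ⟨x.1 ∘ idxMap j, x.2.comp (idxMap_strictMono j)⟩

/-- `f'(0) = 0`, `f'(n) = f(n²)` for `n ≥ 1`. -/
def fp (f : ℕ → ℕ) (n : ℕ) : ℕ := if n = 0 then 0 else f (n ^ 2)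

/-- `D_f = {x ∈ [ℕ]^ℕ : x(n) ≤ f(n) for infinitely many n}`. -/
def Df (f : ℕ → ℕ) : Set IncSeq := {x | {n : ℕ | x.1 n ≤ f n}.Infinite}

/-- The set of positions of `x` lying in the interval `[f'(n), f'(n+1))`,
representing `x ∩ [f'(n), f'(n+1))`. -/
def blockIdx (f : ℕ → ℕ) (x : IncSeq) (n : ℕ) : Set ℕ :=
  {k : ℕ | fp f n ≤ x.1 k ∧ x.1 k < fp f (n + 1)}

/-- `A = {x ∈ D_f : the minimal n with x ∩ [f'(n), f'(n+1)) ≠ ∅ satisfies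
|x ∩ [f'(n), f'(n+1))| = 3}`. -/
def Aset (f : ℕ → ℕ) : Set IncSeq :=
  {x ∈ Df f | ∃ n : ℕ, (∀ m < n, blockIdx f x m = ∅) ∧
    (blockIdx f x n).Nonempty ∧ (blockIdx f x n).ncard = 3}

/-- `Ψ_f(x) = 1` iff the minimal `l ≥ 0` with `S^l(x) ∈ A` is even. -/
noncomputable def Psi (f : ℕ → ℕ) (x : IncSeq) : Bool :=
  decide (Even (sInf {l : ℕ | Sh^[l] x ∈ Aset f}))

/-- For every `x ∈ [ℕ]^ℕ`, the set `A ∩ ran(H_x)` is finite. -/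
theorem stmt_7 (f : ℕ → ℕ) (hf : StrictMono f) (x : IncSeq) :
    (Aset f ∩ Set.range (Hx x)).Finite := by
  have hfp_mono : Monotone (fp f) := by
    intro a b hab
    unfold fp
    split_ifs with h1 h2 h2
    · omega
    · exact Nat.zero_le _
    · omega
    · exact hf.monotone (by nlinarith)
  have hex : ∀ v : ℕ, ∃ m, v < fp f (m + 1) := by
    intro v
    refine ⟨v, ?_⟩
    have h1 : v + 1 ≤ (v + 1) ^ 2 := by nlinarith
    have := le_trans h1 hf.le_apply
    simpa [fp] using this
  set B := fp f (Nat.find (hex (x.1 1)) + 1) with hB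
  have key : ∀ j, 2 * B ≤ j → Hx x j ∉ Aset f := by
    intro j hj hA
    obtain ⟨-, n, hemp, hne, hcard⟩ := hA
    set h := Hx x j with hh
    have h0lb : fp f n ≤ h.1 0 := by
      by_contra hcon
      push_neg at hcon
      obtain ⟨m, hm1, hm2⟩ : ∃ m, fp f m ≤ h.1 0 ∧ h.1 0 < fp f (m + 1) := by
        refine ⟨Nat.find (hex (h.1 0)), ?_, Nat.find_spec (hex (h.1 0))⟩
        rcases Nat.eq_zero_or_pos (Nat.find (hex (h.1 0))) with he | hp
        · rw [he]; simp [fp]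
        · have := Nat.find_min (hex (h.1 0)) (Nat.sub_lt hp one_pos)
          push_neg at this
          have h2 : Nat.find (hex (h.1 0)) - 1 + 1 = Nat.find (hex (h.1 0)) := by omega
          rwa [h2] at this
      have hmn : m < n := by
        by_contra hge
        push_neg at hge
        exact absurd (le_trans (hfp_mono hge) hm1) (not_le.mpr hcon)
      have : (0 : ℕ) ∈ blockIdx f h m := ⟨hm1, hm2⟩
      rw [hemp m hmn] at this
      exact this
    have h0le : h.1 0 ≤ x.1 1 := by
      show x.1 (idxMap j 0) ≤ x.1 1
      apply x.2.monotone
      unfold idxMap; split_ifs <;> omega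
    have hnle : n ≤ Nat.find (hex (x.1 1)) := by
      by_contra hc
      push_neg at hc
      have h1 : fp f (Nat.find (hex (x.1 1)) + 1) ≤ fp f n := hfp_mono hc
      have h2 : x.1 1 < fp f (Nat.find (hex (x.1 1)) + 1) := Nat.find_spec (hex (x.1 1))
      omega
    have hnB : fp f (n + 1) ≤ B := hfp_mono (by omega)
    have hsub : blockIdx f h n ⊆ ({0, 1} : Set ℕ) := by
      intro k hk
      by_contra hk2
      have hk3 : 2 ≤ k := by
        simp only [Set.mem_insert_iff, Set.mem_singleton_iff] at hk2; omega
      have hidx : j / 2 + 2 ≤ idxMap j k := by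
        unfold idxMap; split_ifs <;> omega
      have hge : idxMap j k ≤ x.1 (idxMap j k) := x.2.le_apply
      have : h.1 k < fp f (n + 1) := hk.2
      have hBk : B + 2 ≤ h.1 k := by
        show B + 2 ≤ x.1 (idxMap j k)
        omega
      omega
    have hle2 : (blockIdx f h n).ncard ≤ 2 := by
      have := Set.ncard_le_ncard hsub (Set.toFinite _)
      simpa using this
    omega
  have hsub : Aset f ∩ Set.range (Hx x) ⊆ Hx x '' Set.Iio (2 * B) := by
    rintro y ⟨hyA, j, rfl⟩
    refine ⟨j, ?_, rfl⟩
    by_contra hc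
    simp only [Set.mem_Iio, not_lt] at hc
    exact key j hc hyA
  exact Set.Finite.subset ((Set.finite_Iio _).image _) hsub
end

section
/- Let f : ℕ → ℕ be strictly increasing and let Ψ_f : D_f → {0,1} be defined as above (Ψ_f(x) = 1 iff the minimal l with S^l(x) ∈ A is even). Then for every x ∈ [ℕ]^ℕ with ran(H_x) ⊆ D_f, the sequence i ↦ Ψ_f(H_x(i)) eventually weakly alternates, i.e., there is i₀ such that Ψ_f(H_x(2i)) ≠ Ψ_f(H_x(2i+1)) for all i ≥ i₀. -/
lemma fp_strictMono {f : ℕ → ℕ} (hf : StrictMono f) : StrictMono (fp f) := by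
  apply strictMono_nat_of_lt_succ
  intro n
  rcases n with _ | n
  · show fp f 0 < fp f 1
    have h0 : fp f 0 = 0 := by simp [fp]
    have h1 : fp f 1 = f (1 ^ 2) := by simp [fp]
    have h2 : f 0 < f (1 ^ 2) := hf (by norm_num)
    omega
  · show fp f (n + 1) < fp f (n + 2)
    have h1 : fp f (n + 1) = f ((n + 1) ^ 2) := by simp [fp]
    have h2 : fp f (n + 2) = f ((n + 2) ^ 2) := by simp [fp]
    have h3 : f ((n + 1) ^ 2) < f ((n + 2) ^ 2) :=
      hf (Nat.pow_lt_pow_left (by omega) (by norm_num))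
    omega

lemma le_fp {f : ℕ → ℕ} (hf : StrictMono f) (n : ℕ) : n ≤ fp f (n + 1) := by
  unfold fp
  simp only [if_neg (by omega : (n+1:ℕ) ≠ 0)]
  have h1 : (n + 1) ^ 2 ≤ f ((n + 1) ^ 2) := hf.le_apply
  nlinarith

lemma exists_blockOf {f : ℕ → ℕ} (hf : StrictMono f) (v : ℕ) :
    ∃ n, fp f n ≤ v ∧ v < fp f (n + 1) := by
  have hex : ∃ n, v < fp f (n + 1) := ⟨v + 1, by have := le_fp hf (v + 1); omega⟩
  refine ⟨Nat.find hex, ?_, Nat.find_spec hex⟩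
  rcases h : Nat.find hex with _ | m
  · simp [fp]
  · have := Nat.find_min hex (by omega : m < Nat.find hex)
    omega

def tl (x : IncSeq) (m : ℕ) : IncSeq := ⟨fun k => x.1 (m + k), fun a b h => x.2 (by omega)⟩

lemma Sh_tl (x : IncSeq) (m : ℕ) : Sh (tl x m) = tl x (m + 1) := by
  apply Subtype.ext
  funext k
  show x.1 (m + (k + 1)) = x.1 (m + 1 + k)
  exact congrArg x.1 (by omega)

lemma iterate_Sh_tl (x : IncSeq) (m l : ℕ) : Sh^[l] (tl x m) = tl x (m + l) := by
  induction l generalizing m with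
  | zero => simp
  | succ l ih =>
    rw [Function.iterate_succ_apply, Sh_tl, ih]
    congr 1
    omega

lemma Sh_Hx_even (x : IncSeq) (i : ℕ) : Sh (Hx x (2 * i)) = Hx x (2 * i + 1) := by
  apply Subtype.ext
  funext k
  show x.1 (idxMap (2 * i) (k + 1)) = x.1 (idxMap (2 * i + 1) k)
  refine congrArg x.1 ?_
  have e1 : (2 * i) % 2 = 0 := by omega
  have e2 : (2 * i) / 2 = i := by omega
  have e3 : (2 * i + 1) % 2 = 1 := by omega
  have e4 : (2 * i + 1) / 2 = i := by omega
  simp only [idxMap, e1, e2, e3, e4]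
  clear e1 e2 e3 e4
  split_ifs <;> first | omega | simp_all

lemma Sh_Hx_odd (x : IncSeq) (i : ℕ) : Sh (Hx x (2 * i + 1)) = tl x (i + 2) := by
  apply Subtype.ext
  funext k
  show x.1 (idxMap (2 * i + 1) (k + 1)) = x.1 (i + 2 + k)
  refine congrArg x.1 ?_
  have e3 : (2 * i + 1) % 2 = 1 := by omega
  have e4 : (2 * i + 1) / 2 = i := by omega
  simp only [idxMap, e3, e4]
  clear e3 e4
  split_ifs <;> first | omega | simp_all

lemma tl_mem_Df {f : ℕ → ℕ} {x : IncSeq} (hx : ∀ j : ℕ, Hx x j ∈ Df f) (i : ℕ) :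
    tl x (i + 2) ∈ Df f := by
  have h := hx (2 * i + 3)
  have hsub : {n : ℕ | (Hx x (2 * i + 3)).1 n ≤ f n} \ {0}
      ⊆ {n : ℕ | (tl x (i + 2)).1 n ≤ f n} := by
    rintro n ⟨hn, hn0⟩
    simp only [Set.mem_singleton_iff] at hn0
    simp only [Set.mem_setOf_eq] at hn ⊢
    have : (tl x (i + 2)).1 n = (Hx x (2 * i + 3)).1 n := by
      show x.1 (i + 2 + n) = x.1 (idxMap (2 * i + 3) n)
      refine congrArg x.1 ?_
      have e3 : (2 * i + 3) % 2 = 1 := by omega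
      have e4 : (2 * i + 3) / 2 = i + 1 := by omega
      simp only [idxMap, e3, e4]
      clear e3 e4
      split_ifs <;> first | omega | simp_all
    rw [this]
    exact hn
  exact ((h.diff (Set.finite_singleton 0)).mono hsub)

lemma exists_tail_Aset {f : ℕ → ℕ} (hf : StrictMono f) {x : IncSeq}
    (hx : ∀ j : ℕ, Hx x j ∈ Df f) (i : ℕ) :
    ∃ m : ℕ, tl x (i + 2 + m) ∈ Aset f := by
  set y := tl x (i + 2) with hy_def
  have hy : y ∈ Df f := tl_mem_Df hx i
  obtain ⟨n, hn_mem, hn9⟩ := hy.exists_gt 8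
  have hn9' : 9 ≤ n := hn9
  set r := Nat.sqrt n with hr_def
  have hr2 : r ^ 2 ≤ n := Nat.sqrt_le' n
  have hrlt : n < (r + 1) ^ 2 := Nat.lt_succ_sqrt' n
  have hr3 : 3 ≤ r := by nlinarith
  -- all y k, k ≤ n, are below fp f (r+1)
  have hbound : ∀ k ≤ n, y.1 k < fp f (r + 1) := by
    intro k hk
    have h1 : y.1 k ≤ y.1 n := y.2.monotone hk
    have h2 : y.1 n ≤ f n := hn_mem
    have h3 : f n < f ((r + 1) ^ 2) := hf hrlt
    have : fp f (r + 1) = f ((r + 1) ^ 2) := by simp [fp]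
    omega
  -- block function
  have hg := fun k => (exists_blockOf hf (y.1 k)).choose_spec
  set g : ℕ → ℕ := fun k => (exists_blockOf hf (y.1 k)).choose with hg_def
  have hmaps : ∀ k ∈ Finset.range (n + 1), g k ∈ Finset.range (r + 1) := by
    intro k hk
    simp only [Finset.mem_range] at hk ⊢
    have h1 : fp f (g k) ≤ y.1 k := (hg k).1
    have h2 : y.1 k < fp f (r + 1) := hbound k (by omega)
    have : fp f (g k) < fp f (r + 1) := by omega
    exact (fp_strictMono hf).lt_iff_lt.mp this
  have hcard : (Finset.range (r + 1)).card * 2 < (Finset.range (n + 1)).card := by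
    simp only [Finset.card_range]
    nlinarith
  obtain ⟨b, _, hfiber⟩ := Finset.exists_lt_card_fiber_of_mul_lt_card_of_maps_to hmaps hcard
  -- least index with value ≥ fp f b
  have hpex : ∃ k, fp f b ≤ y.1 k := by
    obtain ⟨k₀, hk₀⟩ := Finset.card_pos.mp (by omega : 0 < (Finset.filter (fun k => g k = b)
      (Finset.range (n + 1))).card)
    simp only [Finset.mem_filter] at hk₀
    exact ⟨k₀, hk₀.2 ▸ (hg k₀).1⟩
  set p := Nat.find hpex with hp_def
  have hp : fp f b ≤ y.1 p := Nat.find_spec hpex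
  have hpmin : ∀ q, q < p → y.1 q < fp f b := by
    intro q hq
    have := Nat.find_min hpex hq
    omega
  set z := tl x (i + 2 + p) with hz_def
  have hzy : ∀ k, z.1 k = y.1 (p + k) := by
    intro k
    show x.1 (i + 2 + p + k) = x.1 (i + 2 + (p + k))
    exact congrArg x.1 (by omega)
  have hzlb : ∀ k, fp f b ≤ z.1 k := by
    intro k
    rw [hzy]
    exact le_trans hp (y.2.monotone (by omega))
  -- least index of z with value ≥ fp f (b+1)
  have hcex : ∃ k, fp f (b + 1) ≤ z.1 k := by
    refine ⟨fp f (b + 1), ?_⟩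
    have : i + 2 + p + fp f (b + 1) ≤ x.1 (i + 2 + p + fp f (b + 1)) := x.2.le_apply
    show fp f (b + 1) ≤ x.1 (i + 2 + p + fp f (b + 1))
    omega
  set c := Nat.find hcex with hc_def
  have hcz : fp f (b + 1) ≤ z.1 c := Nat.find_spec hcex
  have hcmin : ∀ k, k < c → z.1 k < fp f (b + 1) := by
    intro k hk
    have := Nat.find_min hcex hk
    omega
  have hciff : ∀ k, z.1 k < fp f (b + 1) ↔ k < c := by
    intro k
    constructor
    · intro h
      by_contra hk
      have : z.1 c ≤ z.1 k := z.2.monotone (by omega)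
      omega
    · exact hcmin k
  -- c ≥ 3
  have hc3 : 3 ≤ c := by
    have hsub : Finset.filter (fun k => g k = b) (Finset.range (n + 1))
        ⊆ Finset.Ico p (p + c) := by
      intro k hk
      simp only [Finset.mem_filter] at hk
      have h1 : fp f b ≤ y.1 k := hk.2 ▸ (hg k).1
      have h2 : y.1 k < fp f (b + 1) := hk.2 ▸ (hg k).2
      simp only [Finset.mem_Ico]
      constructor
      · by_contra h
        have := hpmin k (by omega)
        omega
      · by_contra h
        have : z.1 (k - p) = y.1 k := by
          rw [hzy]
          exact congrArg y.1 (by omega)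
        have h3 : z.1 c ≤ z.1 (k - p) := z.2.monotone (by omega)
        omega
    have := Finset.card_le_card hsub
    rw [Nat.card_Ico] at this
    omega
  refine ⟨p + (c - 3), ?_⟩
  set w := tl x (i + 2 + (p + (c - 3))) with hw_def
  have hwz : ∀ k, w.1 k = z.1 (c - 3 + k) := by
    intro k
    show x.1 (i + 2 + (p + (c - 3)) + k) = x.1 (i + 2 + p + (c - 3 + k))
    exact congrArg x.1 (by omega)
  refine ⟨?_, b, ?_, ?_, ?_⟩
  · -- w ∈ Df f
    have : i + 2 + (p + (c - 3)) = (i + (p + (c - 3))) + 2 := by omega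
    rw [hw_def, this]
    exact tl_mem_Df hx _
  · -- earlier blocks empty
    intro m hm
    ext k
    simp only [blockIdx, Set.mem_setOf_eq, Set.mem_empty_iff_false, iff_false, not_and, not_lt]
    intro _
    have h1 : fp f b ≤ w.1 k := by rw [hwz]; exact hzlb _
    have h2 : fp f (m + 1) ≤ fp f b := (fp_strictMono hf).monotone (by omega)
    omega
  · -- nonempty
    refine ⟨0, ?_, ?_⟩
    · rw [hwz]; exact hzlb _
    · rw [hwz]
      exact hcmin _ (by omega)
  · -- ncard = 3
    have heq : blockIdx f w b = (↑({0, 1, 2} : Finset ℕ) : Set ℕ) := by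
      ext k
      simp only [blockIdx, Set.mem_setOf_eq, Finset.coe_insert, Finset.coe_singleton,
        Set.mem_insert_iff, Set.mem_singleton_iff]
      rw [hwz]
      constructor
      · rintro ⟨_, h2⟩
        have := (hciff _).mp h2
        omega
      · intro h
        refine ⟨hzlb _, (hciff _).mpr (by omega)⟩
    rw [heq, Set.ncard_coe_finset]
    decide


/-- If `ran(H_x) ⊆ D_f`, then the sequence `i ↦ Ψ_f(H_x(i))` eventually weakly alternates. -/
theorem stmt_9 (f : ℕ → ℕ) (hf : StrictMono f) (x : IncSeq)
    (hx : ∀ j : ℕ, Hx x j ∈ Df f) :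
    ∃ i₀ : ℕ, ∀ i ≥ i₀, Psi f (Hx x (2 * i)) ≠ Psi f (Hx x (2 * i + 1)) := by
  obtain ⟨n₀, hn₀l, hn₀r⟩ := exists_blockOf hf (x.1 0)
  refine ⟨fp f (n₀ + 1), ?_⟩
  intro i hi
  have hv0 : (Hx x (2 * i)).1 0 = x.1 0 := by
    show x.1 (idxMap (2 * i) 0) = x.1 0
    refine congrArg x.1 ?_
    simp [idxMap]
  have hvk : ∀ k, 2 ≤ k → (Hx x (2 * i)).1 k = x.1 (i + k) := by
    intro k hk
    show x.1 (idxMap (2 * i) k) = x.1 (i + k)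
    refine congrArg x.1 ?_
    have e1 : (2 * i) % 2 = 0 := by omega
    have e2 : (2 * i) / 2 = i := by omega
    simp only [idxMap, e1, e2]
    clear e1 e2
    split_ifs <;> first | omega | simp_all
  have hnotA : Hx x (2 * i) ∉ Aset f := by
    rintro ⟨-, n, hemp, hne, hcard⟩
    have h0mem : (0 : ℕ) ∈ blockIdx f (Hx x (2 * i)) n₀ := by
      refine ⟨?_, ?_⟩ <;> rw [hv0]
      · exact hn₀l
      · exact hn₀r
    have hn_eq : n = n₀ := by
      rcases lt_trichotomy n n₀ with h | h | h
      · obtain ⟨k, hk1, hk2⟩ := hne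
        have hmono : x.1 0 ≤ (Hx x (2 * i)).1 k := by
          rw [← hv0]
          exact (Hx x (2 * i)).2.monotone (Nat.zero_le k)
        have : fp f (n + 1) ≤ fp f n₀ := (fp_strictMono hf).monotone (by omega)
        omega
      · exact h
      · exact absurd h0mem (by rw [hemp n₀ h]; exact Set.notMem_empty 0)
    subst hn_eq
    have hsub : blockIdx f (Hx x (2 * i)) n ⊆ {0, 1} := by
      intro k hk
      simp only [Set.mem_insert_iff, Set.mem_singleton_iff]
      by_contra hkk
      push_neg at hkk
      have hk2 : 2 ≤ k := by omega
      have hlt := hk.2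
      rw [hvk k hk2] at hlt
      have hle : i + k ≤ x.1 (i + k) := x.2.le_apply
      omega
    have hle2 := Set.ncard_le_ncard hsub (Set.toFinite _)
    rw [Set.ncard_pair (by omega : (0:ℕ) ≠ 1)] at hle2
    omega
  have hiter : ∀ l, Sh^[l + 2] (Hx x (2 * i)) = tl x (i + 2 + l) := by
    intro l
    show Sh^[l + 1 + 1] (Hx x (2 * i)) = tl x (i + 2 + l)
    rw [Function.iterate_succ_apply, Function.iterate_succ_apply, Sh_Hx_even, Sh_Hx_odd,
      iterate_Sh_tl]
  obtain ⟨m, hm⟩ := exists_tail_Aset hf hx i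
  have hL₀ne : {l : ℕ | Sh^[l] (Hx x (2 * i)) ∈ Aset f}.Nonempty := by
    refine ⟨m + 2, ?_⟩
    show Sh^[m + 2] (Hx x (2 * i)) ∈ Aset f
    rw [hiter m]
    exact hm
  set m₀ := sInf {l : ℕ | Sh^[l] (Hx x (2 * i)) ∈ Aset f} with hm₀def
  have hm₀mem : Sh^[m₀] (Hx x (2 * i)) ∈ Aset f := Nat.sInf_mem hL₀ne
  have hm₀pos : 1 ≤ m₀ := by
    rcases Nat.eq_zero_or_pos m₀ with h | h
    · rw [h, Function.iterate_zero_apply] at hm₀mem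
      exact absurd hm₀mem hnotA
    · exact h
  have hshift : ∀ l, Sh^[l] (Hx x (2 * i + 1)) = Sh^[l + 1] (Hx x (2 * i)) := by
    intro l
    rw [Function.iterate_succ_apply, Sh_Hx_even]
  have hmem1 : (m₀ - 1) ∈ {l : ℕ | Sh^[l] (Hx x (2 * i + 1)) ∈ Aset f} := by
    show Sh^[m₀ - 1] (Hx x (2 * i + 1)) ∈ Aset f
    rw [hshift, (by omega : m₀ - 1 + 1 = m₀)]
    exact hm₀mem
  have hL₁inf : sInf {l : ℕ | Sh^[l] (Hx x (2 * i + 1)) ∈ Aset f} = m₀ - 1 := by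
    apply le_antisymm
    · exact Nat.sInf_le hmem1
    · apply le_csInf ⟨_, hmem1⟩
      intro l hl
      have hl' : (l + 1) ∈ {l : ℕ | Sh^[l] (Hx x (2 * i)) ∈ Aset f} := by
        show Sh^[l + 1] (Hx x (2 * i)) ∈ Aset f
        rw [← hshift]
        exact hl
      have h2 := Nat.sInf_le hl'
      rw [← hm₀def] at h2
      omega
  show Psi f (Hx x (2 * i)) ≠ Psi f (Hx x (2 * i + 1))
  simp only [Psi]
  rw [← hm₀def, hL₁inf]
  simp only [ne_eq, decide_eq_decide]
  rw [Nat.even_iff, Nat.even_iff]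
  omega
end

section
/- Let t be a finite binary string and B ⊆ N_t be comeager in N_t. Let s be a finite binary string extending t. Then there exist c ∈ 2^ℕ such that both s ⌢ (0) ⌢ c ∈ B and s ⌢ (1) ⌢ c ∈ B. -/
/-- The basic clopen set `N_t` of infinite binary sequences extending the finite string `t`. -/
def Nt (t : List Bool) : Set (ℕ → Bool) :=
  {u : ℕ → Bool | ∀ i < t.length, u i = t.getD i false}

/-- The concatenation `s ⌢ (ε) ⌢ c` of a finite string `s`, a bit `ε`, and an infinite
sequence `c`, as an infinite binary sequence. -/
def ext (s : List Bool) (ε : Bool) (c : ℕ → Bool) : ℕ → Bool := fun i =>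
  if i < s.length then s.getD i false else if i = s.length then ε else c (i - s.length - 1)

lemma Nt_isOpen (t : List Bool) : IsOpen (Nt t) := by
  have : Nt t = ⋂ i ∈ Finset.range t.length,
      (fun u : ℕ → Bool => u i) ⁻¹' {t.getD i false} := by
    ext u
    simp [Nt, Set.mem_iInter]
  rw [this]
  exact isOpen_biInter_finset fun i _ =>
    (isOpen_discrete _).preimage (continuous_apply i)

lemma ext_continuous (s : List Bool) (ε : Bool) : Continuous (ext s ε) := by
  refine continuous_pi fun i => ?_
  unfold ext
  split
  · exact continuous_const
  · split
    · exact continuous_const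
    · exact continuous_apply _

/-- Retraction: read off the tail after position `s.length`. -/
def tail (s : List Bool) (u : ℕ → Bool) : ℕ → Bool := fun j => u (j + s.length + 1)

lemma tail_continuous (s : List Bool) : Continuous (tail s) :=
  continuous_pi fun j => continuous_apply _

lemma tail_ext (s : List Bool) (ε : Bool) (c : ℕ → Bool) : tail s (ext s ε c) = c := by
  funext j
  simp only [tail, ext]
  rw [if_neg (by omega), if_neg (by omega)]
  congr 1
  omega

lemma ext_mem_Nt (s : List Bool) (ε : Bool) (c : ℕ → Bool) :
    ext s ε c ∈ Nt (s ++ [ε]) := by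
  intro i hi
  simp only [List.length_append, List.length_cons, List.length_nil] at hi
  by_cases h : i < s.length
  · simp only [ext, if_pos h]
    rw [List.getD_append _ _ _ _ h]
  · have : i = s.length := by omega
    subst this
    simp [ext, List.getD_eq_getElem?_getD, List.getElem?_append_right (le_refl _)]

lemma ext_of_mem_Nt (s : List Bool) (ε : Bool) {u : ℕ → Bool}
    (hu : u ∈ Nt (s ++ [ε])) : ext s ε (tail s u) = u := by
  have hlen : (s ++ [ε]).length = s.length + 1 := by simp
  funext i
  simp only [ext, tail]
  by_cases h : i < s.length
  · rw [if_pos h, hu i (by omega), List.getD_append _ _ _ _ h]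
  · by_cases h2 : i = s.length
    · rw [if_neg h, if_pos h2, h2, hu s.length (by omega)]
      simp [List.getD_eq_getElem?_getD, List.getElem?_append_right (le_refl _)]
    · rw [if_neg h, if_neg h2]
      congr 1
      omega

lemma ext_isOpenMap (s : List Bool) (ε : Bool) : IsOpenMap (ext s ε) := by
  intro U hU
  have himg : ext s ε '' U = tail s ⁻¹' U ∩ Nt (s ++ [ε]) := by
    ext u
    constructor
    · rintro ⟨c, hc, rfl⟩
      exact ⟨by rwa [Set.mem_preimage, tail_ext], ext_mem_Nt s ε c⟩
    · rintro ⟨h1, h2⟩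
      exact ⟨tail s u, h1, ext_of_mem_Nt s ε h2⟩
  rw [himg]
  exact ((tail_continuous s).isOpen_preimage U hU).inter (Nt_isOpen _)

lemma ext_mem_Nt_prefix (t s : List Bool) (hs : t <+: s) (ε : Bool) (c : ℕ → Bool) :
    ext s ε c ∈ Nt t := by
  intro i hi
  have hle : t.length ≤ s.length := hs.length_le
  simp only [ext, if_pos (lt_of_lt_of_le hi hle)]
  obtain ⟨r, rfl⟩ := hs
  rw [List.getD_append _ _ _ _ hi]

/-- If `B ⊆ N_t` is comeager in `N_t` and `s` is a finite string extending `t`, then there is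
`c ∈ 2^ℕ` with both `s ⌢ (0) ⌢ c ∈ B` and `s ⌢ (1) ⌢ c ∈ B`. -/
theorem stmt_11 (t : List Bool) (B : Set (ℕ → Bool)) (hBsub : B ⊆ Nt t)
    (hB : IsMeagre (Nt t \ B)) (s : List Bool) (hs : t <+: s) :
    ∃ c : ℕ → Bool, ext s false c ∈ B ∧ ext s true c ∈ B := by
  have key : ∀ ε : Bool, IsMeagre (ext s ε ⁻¹' B)ᶜ := by
    intro ε
    have hmeag : IsMeagre (ext s ε ⁻¹' (Nt t \ B)) :=
      hB.preimage_of_isOpenMap (ext_continuous s ε) (ext_isOpenMap s ε)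
    refine hmeag.mono fun c hc => ?_
    exact ⟨ext_mem_Nt_prefix t s hs ε c, hc⟩
  have hmeag : IsMeagre ((ext s false ⁻¹' B)ᶜ ∪ (ext s true ⁻¹' B)ᶜ) := by
    rw [IsMeagre, Set.compl_union]
    exact Filter.inter_mem (key false) (key true)
  have hdense : Dense ((ext s false ⁻¹' B)ᶜ ∪ (ext s true ⁻¹' B)ᶜ)ᶜ :=
    dense_of_mem_residual hmeag
  obtain ⟨c, hc⟩ := hdense.nonempty
  rw [Set.compl_union, Set.mem_inter_iff, compl_compl, compl_compl] at hc
  exact ⟨c, hc.1, hc.2⟩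
end

section
/- Fix a dense sequence (s_n) with s_n ∈ {0,1}^n, a function φ : ℕ → ℤ/2, and i₀ ∈ ℕ such that φ(2i) ≠ φ(2i+1) for all i ≥ i₀. Then for every r ∈ [ℕ]^ℕ there exists ψ_r : {0,1}^{i₀} → ℤ/2 such that whenever u = s_i ⌢ (ε) ⌢ c and v = s_i ⌢ (1-ε) ⌢ c with i < i₀, ε ∈ {0,1}, c ∈ {0,1}^{i₀-i-1}, we have ψ_r(u) = ψ_r(v) if and only if φ(2·r(i)) ≠ φ(2·r(i)+1). -/
open Relation in
lemma stmt13_aux (s : ℕ → List Bool) (hlen : ∀ n, (s n).length = n) (W : ℕ → ZMod 2) :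
    ∀ n : ℕ, ∃ ψ : List Bool → ZMod 2, ∀ i < n, ∀ ε : Bool, ∀ c : List Bool,
      c.length = n - i - 1 → ψ (s i ++ [ε] ++ c) + W i = ψ (s i ++ [!ε] ++ c) := by
  intro n
  induction n with
  | zero => exact ⟨0, fun i hi => absurd hi (Nat.not_lt_zero i)⟩
  | succ n ih =>
    classical
    obtain ⟨ψ, hψ⟩ := ih
    set Adj : List Bool → List Bool → Prop := fun x y =>
      ∃ i, i < n ∧ ∃ ε : Bool, ∃ c : List Bool,
        c.length = n - i - 1 ∧ x = s i ++ [ε] ++ c ∧ y = s i ++ [!ε] ++ c with hAdj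
    have hAdjSymm : ∀ x y, Adj x y → Adj y x := by
      rintro x y ⟨i, hi, ε, c, hc, hx, hy⟩
      exact ⟨i, hi, !ε, c, hc, hy, by simpa using hx⟩
    refine ⟨fun u => ψ (u.take n) +
      (if ReflTransGen Adj (u.take n) (s n) ∧ u.getD n false = true then W n else 0), ?_⟩
    intro i hi ε c hc
    rcases Nat.lt_succ_iff_lt_or_eq.mp hi with h | h
    · -- i < n
      have hc' : c.length = n - i := by omega
      have h1 : ∀ b : Bool, (s i ++ [b] ++ c).take n = s i ++ [b] ++ c.take (n - i - 1) := by
        intro b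
        rw [List.take_append]
        have hl : (s i ++ [b]).length = i + 1 := by simp [hlen]
        rw [List.take_of_length_le (by omega), hl, Nat.sub_sub]
      have h2 : ∀ b : Bool, (s i ++ [b] ++ c).getD n false = c.getD (n - i - 1) false := by
        intro b
        have hl : (s i ++ [b]).length = i + 1 := by simp [hlen]
        rw [List.getD_append_right _ _ _ _ (by omega : (s i ++ [b]).length ≤ n), hl,
          Nat.sub_sub]
      have hctake : (c.take (n - i - 1)).length = n - i - 1 := by
        rw [List.length_take]; omega
      have hedge : Adj ((s i ++ [ε] ++ c).take n) ((s i ++ [!ε] ++ c).take n) := by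
        rw [h1, h1]
        exact ⟨i, h, ε, c.take (n - i - 1), hctake, rfl, rfl⟩
      have hrel : ReflTransGen Adj ((s i ++ [ε] ++ c).take n) (s n) ↔
          ReflTransGen Adj ((s i ++ [!ε] ++ c).take n) (s n) := by
        constructor
        · intro hx; exact ReflTransGen.head (hAdjSymm _ _ hedge) hx
        · intro hx; exact ReflTransGen.head hedge hx
      have hind : (if ReflTransGen Adj ((s i ++ [ε] ++ c).take n) (s n) ∧
            (s i ++ [ε] ++ c).getD n false = true then W n else 0) =
          (if ReflTransGen Adj ((s i ++ [!ε] ++ c).take n) (s n) ∧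
            (s i ++ [!ε] ++ c).getD n false = true then W n else 0) := by
        rw [h2, h2]
        exact if_congr (and_congr_left fun _ => hrel) rfl rfl
      have hmain := hψ i h ε (c.take (n - i - 1)) hctake
      simp only []
      rw [hind]
      rw [h1 ε, h1 (!ε)]
      linear_combination hmain
    · -- i = n
      have hn : n = i := h.symm
      subst hn
      have hc0 : c = [] := List.length_eq_zero_iff.mp (by omega)
      subst hc0
      have htake : ∀ b : Bool, (s n ++ [b] ++ []).take n = s n := by
        intro b
        rw [List.append_nil, List.take_append,
          List.take_of_length_le (le_of_eq (hlen n)), hlen]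
        simp
      have hgetD : ∀ b : Bool, (s n ++ [b] ++ []).getD n false = b := by
        intro b
        rw [List.append_nil, List.getD_append_right _ _ _ _ (le_of_eq (hlen n)), hlen]
        simp
      have hWW : W n + W n = 0 := by
        have : (2 : ZMod 2) = 0 := by decide
        linear_combination (W n) * this
      simp only [htake, hgetD, ReflTransGen.refl, true_and]
      cases ε <;> simp <;> linear_combination hWW

/-- Given a dense sequence `s_n ∈ {0,1}^n`, `φ : ℕ → ℤ/2` with `φ(2i) ≠ φ(2i+1)` for `i ≥ i₀`,
and `r ∈ [ℕ]^ℕ` (given by its increasing enumeration), there is `ψ_r : {0,1}^{i₀} → ℤ/2` such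
that for every edge `u = s_i ⌢ (ε) ⌢ c`, `v = s_i ⌢ (1-ε) ⌢ c` (`i < i₀`):
`ψ_r(u) = ψ_r(v) ↔ φ(2r(i)) ≠ φ(2r(i)+1)`. -/
theorem stmt_13 (s : ℕ → List Bool) (hlen : ∀ n, (s n).length = n)
    (hdense : ∀ t : List Bool, ∃ n, (s n).take t.length = t ∧ t.length < n)
    (φ : ℕ → ZMod 2) (i₀ : ℕ) (hφ : ∀ i ≥ i₀, φ (2 * i) ≠ φ (2 * i + 1))
    (r : ℕ → ℕ) (hr : StrictMono r) :
    ∃ ψ : {u : List Bool // u.length = i₀} → ZMod 2,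
      ∀ (i : ℕ), i < i₀ → ∀ (ε : Bool) (c : List Bool), c.length = i₀ - i - 1 →
        ∀ (u v : {u : List Bool // u.length = i₀}),
          u.1 = s i ++ [ε] ++ c → v.1 = s i ++ [!ε] ++ c →
          (ψ u = ψ v ↔ φ (2 * r i) ≠ φ (2 * r i + 1)) := by
  classical
  set W : ℕ → ZMod 2 := fun i => if φ (2 * r i) = φ (2 * r i + 1) then 1 else 0 with hW
  obtain ⟨ψ, hψ⟩ := stmt13_aux s hlen W i₀
  refine ⟨fun u => ψ u.1, ?_⟩
  intro i hi ε c hc u v hu hv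
  have key := hψ i hi ε c hc
  have hWiff : W i = 0 ↔ φ (2 * r i) ≠ φ (2 * r i + 1) := by
    by_cases h : φ (2 * r i) = φ (2 * r i + 1)
    · simp only [hW, if_pos h, h, ne_eq, not_true_eq_false, iff_false]
      exact one_ne_zero
    · simp [hW, h]
  simp only [hu, hv]
  rw [← key, left_eq_add]
  exact hWiff
end

section
/- Fix a dense sequence (s_n) with s_n ∈ p^n (strings over the alphabet {0,...,p-1}). For a fixed i₀, define a hypergraph G on p^{i₀} whose hyperedges are the sets {s_n ⌢ (j) ⌢ c : 0 ≤ j ≤ p-1} for n < i₀ and c ∈ p^{i₀-n-1}. Then G is Berge-acyclic, i.e., the bipartite incidence graph between hyperedges and vertices is acyclic. -/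
/-!
Take a cycle in the incidence graph and a hyperedge `e = (N, c)` on it of maximal level `N`. Its
two neighbours on the cycle are `s N ++ [j₁] ++ c` and `s N ++ [j₂] ++ c`, and the rest of the
cycle joins them without passing through `e`, only through hyperedges of level at most `N`. Along
such a path the suffix from position `N` on cannot change: a hyperedge of level `n < N` fixes it,
and a hyperedge `(N, c')` would force `c' = c`. Hence `j₁ = j₂` and the two neighbours coincide.
-/

namespace SimpleGraph

variable {V : Type*} {G : SimpleGraph V}

theorem Walk.IsCycle.exists_walk_snd_penultimate {v : V} {c : G.Walk v v} (hc : c.IsCycle) :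
    ∃ q : G.Walk c.snd c.penultimate, v ∉ q.support ∧ q.support ⊆ c.support := by
  have htail : ¬c.tail.Nil := by
    have := hc.three_le_length
    rw [← Walk.length_eq_zero_iff.not, Walk.length_tail]
    omega
  have hpen : c.tail.penultimate = c.penultimate := by
    have := hc.three_le_length
    simp only [Walk.penultimate, Walk.getVert_tail, Walk.length_tail]
    congr 1
    omega
  have hsupp : c.tail.dropLast.support ++ [v] = c.tail.support :=
    Walk.support_dropLast_concat htail
  refine ⟨c.tail.dropLast.copy rfl hpen, ?_, ?_⟩
  · have hnodup := hc.isPath_tail.support_nodup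
    rw [← hsupp, List.nodup_append] at hnodup
    simpa using fun hv => hnodup.2.2 v hv v (List.mem_singleton_self v) rfl
  · intro x hx
    rw [Walk.support_copy] at hx
    have : x ∈ c.support.tail := by
      rw [← Walk.support_tail_of_not_nil _ hc.not_nil, ← hsupp]
      exact List.mem_append_left _ hx
    exact List.mem_of_mem_tail this

theorem Walk.of_forall_mem_support {P S : V → Prop}
    (hstep : ∀ ⦃a b⦄, G.Adj a b → S b → P a → P b) :
    ∀ {u v} (q : G.Walk u v), (∀ x ∈ q.support, S x) → P u → P v
  | _, _, .nil, _, hu => hu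
  | _, _, .cons h q, hS, hu =>
    q.of_forall_mem_support hstep (fun x hx => hS x (List.mem_cons_of_mem _ hx))
      (hstep h (hS _ (List.mem_cons_of_mem _ q.start_mem_support)) hu)

theorem isAcyclic_of_forall_walk_rank_le {α : Type*} [LinearOrder α] (rank : V → α)
    (h : ∀ ⦃v a b⦄, G.Adj v a → G.Adj v b → ∀ q : G.Walk a b, v ∉ q.support →
      (∀ x ∈ q.support, rank x ≤ rank v) → a = b) :
    G.IsAcyclic := by
  classical
  intro w c hc
  obtain ⟨v, hv, hmax⟩ := c.support.toFinset.exists_max_image rank ⟨w, by simp⟩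
  rw [List.mem_toFinset] at hv
  have hc' := hc.rotate hv
  obtain ⟨q, hvq, hq⟩ := hc'.exists_walk_snd_penultimate
  refine hc'.snd_ne_penultimate <| h (Walk.adj_snd hc'.not_nil)
    (Walk.adj_penultimate hc'.not_nil).symm q hvq fun x hx => hmax x ?_
  simpa [Walk.mem_support_rotate_iff] using hq hx

end SimpleGraph

theorem List.drop_append_singleton_append_of_length_eq {α : Type*} {l c : List α} {j : α}
    {N : ℕ} (h : l.length = N) : (l ++ [j] ++ c).drop N = j :: c := by
  subst h
  simp

theorem List.drop_append_singleton_append_of_length_lt {α : Type*} {l c : List α} {j : α}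
    {N : ℕ} (h : l.length < N) : (l ++ [j] ++ c).drop N = c.drop (N - l.length - 1) := by
  rw [List.drop_append, List.drop_eq_nil_of_le (by simp; omega), List.nil_append]
  simp [Nat.sub_sub]

abbrev EdgeIndex (α : Type*) (i₀ : ℕ) :=
  {e : ℕ × List α // e.1 < i₀ ∧ e.2.length = i₀ - e.1 - 1}

abbrev Word (α : Type*) (i₀ : ℕ) := {u : List α // u.length = i₀}

def IsIncidenceGraph {α : Type*} {i₀ : ℕ} (s : ℕ → List α)
    (G : SimpleGraph (EdgeIndex α i₀ ⊕ Word α i₀)) : Prop :=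
  ∀ a a', G.Adj a a' ↔
    ∃ (e : EdgeIndex α i₀) (u : Word α i₀),
      (∃ j : α, u.1 = s e.1.1 ++ [j] ++ e.1.2) ∧
      ((a = Sum.inl e ∧ a' = Sum.inr u) ∨ (a = Sum.inr u ∧ a' = Sum.inl e))

-- Words get level `0`, below every hyperedge, so a node of maximal level on a cycle is a hyperedge.
def level {α : Type*} {i₀ : ℕ} : EdgeIndex α i₀ ⊕ Word α i₀ → ℕ :=
  Sum.elim (fun e => e.1.1 + 1) fun _ => 0

-- For `n < N` all members `s n ++ [j] ++ c` of the hyperedge `(n, c)` have suffix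
-- `c.drop (N - n - 1)` from position `N` on.
def SuffixAt {α : Type*} {i₀ : ℕ} (N : ℕ) (t : List α) : EdgeIndex α i₀ ⊕ Word α i₀ → Prop
  | .inl e => e.1.1 < N ∧ e.1.2.drop (N - e.1.1 - 1) = t
  | .inr u => u.1.drop N = t

namespace IsIncidenceGraph

variable {α : Type*} {i₀ : ℕ} {s : ℕ → List α} {G : SimpleGraph (EdgeIndex α i₀ ⊕ Word α i₀)}

theorem exists_inr_of_adj_inl (hG : IsIncidenceGraph s G) {e : EdgeIndex α i₀} {x}
    (h : G.Adj (.inl e) x) : ∃ u j, x = .inr u ∧ u.1 = s e.1.1 ++ [j] ++ e.1.2 := by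
  obtain ⟨e', u, ⟨j, hj⟩, ⟨he, rfl⟩ | ⟨he, -⟩⟩ := (hG _ _).1 h
  · exact ⟨u, j, rfl, Sum.inl_injective he ▸ hj⟩
  · exact Sum.inl_ne_inr he |>.elim

theorem exists_inl_of_adj_inr (hG : IsIncidenceGraph s G) {u : Word α i₀} {x}
    (h : G.Adj (.inr u) x) : ∃ e j, x = .inl e ∧ u.1 = s e.1.1 ++ [j] ++ e.1.2 := by
  obtain ⟨e, u', ⟨j, hj⟩, ⟨hu, -⟩ | ⟨hu, rfl⟩⟩ := (hG _ _).1 h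
  · exact Sum.inr_ne_inl hu |>.elim
  · exact ⟨e, j, rfl, Sum.inr_injective hu ▸ hj⟩

theorem suffixAt_of_adj (hlen : ∀ n, (s n).length = n) (hG : IsIncidenceGraph s G)
    {e : EdgeIndex α i₀} {j : α} {a b} (hab : G.Adj a b) (hbe : b ≠ .inl e)
    (hb : level b ≤ level (.inl e)) (ha : SuffixAt e.1.1 (j :: e.1.2) a) :
    SuffixAt e.1.1 (j :: e.1.2) b := by
  cases a with
  | inl e' =>
    obtain ⟨u, j', rfl, hu⟩ := hG.exists_inr_of_adj_inl hab
    obtain ⟨hlt, hdrop⟩ := ha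
    show u.1.drop e.1.1 = _
    rw [hu, List.drop_append_singleton_append_of_length_lt (by rwa [hlen]), hlen, hdrop]
  | inr u =>
    obtain ⟨e', j', rfl, hu⟩ := hG.exists_inl_of_adj_inr hab
    replace ha : u.1.drop e.1.1 = j :: e.1.2 := ha
    rcases (Nat.succ_le_succ_iff.1 hb).lt_or_eq with hlt | heq
    · refine ⟨hlt, ?_⟩
      rw [← ha, hu, List.drop_append_singleton_append_of_length_lt (by rwa [hlen]), hlen]
    · rw [hu, List.drop_append_singleton_append_of_length_eq (by rw [hlen, heq])] at ha
      exact absurd (Subtype.ext (Prod.ext heq (List.cons.inj ha).2))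
        (Sum.inl_injective.ne_iff.1 hbe)

end IsIncidenceGraph

theorem stmt_15_general (p : ℕ) (s : ℕ → List (Fin p))
    (hlen : ∀ n, (s n).length = n)
    (i₀ : ℕ)
    (G : SimpleGraph ({e : ℕ × List (Fin p) // e.1 < i₀ ∧ e.2.length = i₀ - e.1 - 1} ⊕
      {u : List (Fin p) // u.length = i₀}))
    (hG : ∀ a a', G.Adj a a' ↔
      ∃ (e : {e : ℕ × List (Fin p) // e.1 < i₀ ∧ e.2.length = i₀ - e.1 - 1})
        (u : {u : List (Fin p) // u.length = i₀}),
        (∃ j : Fin p, u.1 = s e.1.1 ++ [j] ++ e.1.2) ∧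
        ((a = Sum.inl e ∧ a' = Sum.inr u) ∨ (a = Sum.inr u ∧ a' = Sum.inl e))) :
    G.IsAcyclic := by
  replace hG : IsIncidenceGraph s G := hG
  refine SimpleGraph.isAcyclic_of_forall_walk_rank_le level fun v a b hva hvb q hvq hq => ?_
  cases v with
  | inr u =>
    obtain ⟨e, -, rfl, -⟩ := hG.exists_inl_of_adj_inr hva
    exact absurd (hq _ q.start_mem_support) (by simp [level])
  | inl e =>
    obtain ⟨u₁, j₁, rfl, hu₁⟩ := hG.exists_inr_of_adj_inl hva
    obtain ⟨u₂, j₂, rfl, hu₂⟩ := hG.exists_inr_of_adj_inl hvb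
    have hstart : u₁.1.drop e.1.1 = j₁ :: e.1.2 := by
      rw [hu₁, List.drop_append_singleton_append_of_length_eq (hlen _)]
    have hend : u₂.1.drop e.1.1 = j₁ :: e.1.2 :=
      q.of_forall_mem_support (S := fun x => x ≠ .inl e ∧ level x ≤ level (.inl e))
        (fun _ _ hab hb => hG.suffixAt_of_adj hlen hab hb.1 hb.2)
        (fun x hx => ⟨fun h => hvq (h ▸ hx), hq x hx⟩) hstart
    rw [hu₂, List.drop_append_singleton_append_of_length_eq (hlen _)] at hend
    rw [(List.cons.inj hend).1] at hu₂
    rw [Subtype.ext (hu₁.trans hu₂.symm)]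

/-- For a dense sequence `s_n ∈ p^n`, the hypergraph on `p^{i₀}` with hyperedges
`e_{n,c} = {s_n ⌢ (j) ⌢ c : j < p}` (for `n < i₀`, `c ∈ p^{i₀-n-1}`) is Berge-acyclic:
its bipartite incidence graph between hyperedges and vertices is acyclic. -/
theorem stmt_15 (p : ℕ) (hp : 2 ≤ p) (s : ℕ → List (Fin p))
    (hlen : ∀ n, (s n).length = n)
    (hdense : ∀ t : List (Fin p), ∃ n, (s n).take t.length = t ∧ t.length < n)
    (i₀ : ℕ)
    (G : SimpleGraph ({e : ℕ × List (Fin p) // e.1 < i₀ ∧ e.2.length = i₀ - e.1 - 1} ⊕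
      {u : List (Fin p) // u.length = i₀}))
    (hG : ∀ a a', G.Adj a a' ↔
      ∃ (e : {e : ℕ × List (Fin p) // e.1 < i₀ ∧ e.2.length = i₀ - e.1 - 1})
        (u : {u : List (Fin p) // u.length = i₀}),
        (∃ j : Fin p, u.1 = s e.1.1 ++ [j] ++ e.1.2) ∧
        ((a = Sum.inl e ∧ a' = Sum.inr u) ∨ (a = Sum.inr u ∧ a' = Sum.inl e))) :
    G.IsAcyclic :=
  stmt_15_general p s hlen i₀ G hG
end

section
/- There is a Borel (even Baire measurable) polymorphism from K₂^ℕ to K₂ that is not continuous, where K₂ is the complete graph on 2 vertices. Concretely: there exists a Borel non-continuous function f : {0,1}^ℕ → {0,1} such that whenever x, y ∈ {0,1}^ℕ satisfy x(n) ≠ y(n) for all n, then f(x) ≠ f(y). -/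
/-!
Flip the first coordinate exactly on the set `E` of eventually constant sequences. Since `E` is
closed under pointwise negation, the resulting map commutes with negation, and in `K₂^ℕ` the only
neighbour of `x` is its negation, so it is a polymorphism. `E` is countable, hence Borel, but it is
not open: the constant sequence is a limit of sequences that keep alternating. A continuous flip
would make `E` open.
-/

open Filter Topology

section FlipOn

variable {ι : Type*} {E : Set (ι → Bool)} {i₀ : ι}

open Classical in
noncomputable def flipOn (E : Set (ι → Bool)) (i₀ : ι) (x : ι → Bool) : Bool :=
  if x ∈ E then !x i₀ else x i₀

lemma flipOn_not (hE : ∀ x, (fun i ↦ !x i) ∈ E ↔ x ∈ E) (x : ι → Bool) :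
    flipOn E i₀ (fun i ↦ !x i) = !flipOn E i₀ x := by
  by_cases hx : x ∈ E <;> simp [flipOn, hx, hE]

lemma flipOn_ne_of_forall_ne (hE : ∀ x, (fun i ↦ !x i) ∈ E ↔ x ∈ E) {x y : ι → Bool}
    (hxy : ∀ i, x i ≠ y i) : flipOn E i₀ x ≠ flipOn E i₀ y := by
  obtain rfl : y = fun i ↦ !x i := funext fun i ↦ Bool.eq_not_iff.2 (hxy i).symm
  rw [flipOn_not hE]
  exact Bool.ne_not.2 rfl

lemma measurable_flipOn (hE : MeasurableSet E) : Measurable (flipOn E i₀) :=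
  Measurable.ite hE ((measurable_of_countable not).comp (measurable_pi_apply i₀))
    (measurable_pi_apply i₀)

lemma isOpen_of_continuous_flipOn (h : Continuous (flipOn E i₀)) : IsOpen E := by
  have hE : {x | flipOn E i₀ x ≠ x i₀} = E := by
    ext x
    by_cases hx : x ∈ E <;> simp [flipOn, hx]
  exact hE ▸ isOpen_ne_fun h (continuous_apply i₀)

end FlipOn

lemma countable_setOf_eventuallyConst {α : Type*} [Countable α] :
    {x : ℕ → α | EventuallyConst x atTop}.Countable := by
  refine (Set.countable_range fun p : List α × α ↦ fun n ↦ p.1.getD n p.2).mono ?_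
  intro x hx
  obtain ⟨N, hN⟩ := eventuallyConst_atTop.1 hx
  refine ⟨(List.ofFn fun i : Fin N ↦ x i, x N), funext fun n ↦ ?_⟩
  by_cases hn : n < N
  · simp [List.getD_eq_getElem?_getD, hn]
  · simp [List.getD_eq_getElem?_getD, hn, hN n (not_lt.1 hn)]

lemma not_isOpen_setOf_eventuallyConst {α : Type*} [TopologicalSpace α] [Nontrivial α] :
    ¬ IsOpen {x : ℕ → α | EventuallyConst x atTop} := by
  obtain ⟨a, b, hab⟩ := exists_pair_ne α
  set xs : ℕ → ℕ → α := fun k n ↦ if n < k ∨ Even n then a else b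
  have hxs : ∀ k, ¬ EventuallyConst (xs k) atTop := by
    intro k hk
    obtain ⟨N, hN⟩ := eventuallyConst_atTop_nat.1 hk
    have := hN (2 * (N + k) + 1) (by omega)
    simp [xs, hab, show ¬ 2 * (N + k) + 1 < k by omega, show ¬ 2 * (N + k) + 1 + 1 < k by omega,
      parity_simps] at this
  have hlim : Tendsto xs atTop (𝓝 fun _ ↦ a) := by
    refine tendsto_pi_nhds.2 fun n ↦ tendsto_const_nhds.congr' ?_
    filter_upwards [eventually_gt_atTop n] with k hk
    simp [xs, hk]
  intro hopen
  obtain ⟨k, hk⟩ := (hlim.eventually_mem (hopen.mem_nhds (EventuallyConst.const a))).exists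
  exact hxs k hk

/-- There is a Borel, non-continuous polymorphism `K₂^ℕ → K₂`: a Borel map
`f : {0,1}^ℕ → {0,1}` that is not continuous and satisfies `f x ≠ f y` whenever
`x(n) ≠ y(n)` for all `n`. -/
theorem stmt_16 : ∃ f : (ℕ → Bool) → Bool, Measurable f ∧ ¬ Continuous f ∧
    ∀ x y : ℕ → Bool, (∀ n, x n ≠ y n) → f x ≠ f y := by
  have hneg : ∀ x : ℕ → Bool, EventuallyConst (fun n ↦ !x n) atTop ↔ EventuallyConst x atTop :=
    fun x ↦ ⟨fun h ↦ by simpa [Function.comp_def] using h.comp not, fun h ↦ h.comp not⟩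
  exact ⟨flipOn _ 0, measurable_flipOn countable_setOf_eventuallyConst.measurableSet,
    fun h ↦ not_isOpen_setOf_eventuallyConst (isOpen_of_continuous_flipOn h),
    fun _ _ ↦ flipOn_ne_of_forall_ne hneg⟩
end

section
/- Let F be a finite field of characteristic p and z ∈ F^ℕ a sequence that eventually weakly p-alternates, i.e., there is i₀ with Σ_{0 ≤ j ≤ p-1} z(pi+j) = 1 for all i ≥ i₀. Let H be the Berge-acyclic hypergraph on p^{i₀} with hyperedges e_{n,c} = {s_n ⌢ (j) ⌢ c : j < p} for n < i₀, c ∈ p^{i₀-n-1}, where (s_n) is a fixed dense sequence with s_n ∈ p^n. Then for any r : ℕ → ℕ strictly increasing there exists ψ : p^{i₀} → F such that for each hyperedge e_{n,c}: Σ_{u ∈ e_{n,c}} ψ(u) + Σ_{j<p} z(p·r(n)+j) = 1. -/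
/-- If `z ∈ F^ℕ` eventually weakly `p`-alternates (witnessed by `i₀`) over a finite field `F`
of characteristic `p`, then for any strictly increasing `r : ℕ → ℕ` there is a solution
`ψ : p^{i₀} → F` of the Berge-acyclic system of equations
`∑_{j<p} ψ(s_n ⌢ (j) ⌢ c) + ∑_{j<p} z(p·r(n)+j) = 1` for `n < i₀`, `c ∈ p^{i₀-n-1}`. -/
theorem stmt_18 (F : Type*) [Field F] [Fintype F] (p : ℕ) (hchar : CharP F p)
    (z : ℕ → F) (i₀ : ℕ) (hz : ∀ i ≥ i₀, ∑ j ∈ Finset.range p, z (p * i + j) = 1)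
    (s : ℕ → List (Fin p)) (hlen : ∀ n, (s n).length = n)
    (hdense : ∀ t : List (Fin p), ∃ n, (s n).take t.length = t ∧ t.length < n)
    (r : ℕ → ℕ) (hr : StrictMono r) :
    ∃ ψ : List (Fin p) → F, ∀ n < i₀, ∀ c : List (Fin p), c.length = i₀ - n - 1 →
      (∑ j : Fin p, ψ (s n ++ [j] ++ c)) + ∑ j ∈ Finset.range p, z (p * r n + j) = 1 := by
  classical
  have hp : p.Prime := CharP.char_is_prime F p
  haveI : NeZero p := ⟨hp.ne_zero⟩
  have hp0 : (p : F) = 0 := CharP.cast_eq_zero F p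
  set Step : List (Fin p) → List (Fin p) → Prop :=
    fun t t' => ∃ k jj, t.take k = s k ∧ t' = t.set k jj with hStepdef
  set a : ℕ → F := fun m => 1 - ∑ j ∈ Finset.range p, z (p * r m + j) with ha
  refine ⟨fun u => ∑ m ∈ Finset.range i₀,
      if Relation.ReflTransGen Step (u.take m) (s m) ∧ u[m]? = some 0
      then a m else 0, ?_⟩
  intro n hn c hc
  have hlenn : (s n).length = n := hlen n
  simp only []
  rw [Finset.sum_comm]
  have hsetl : ∀ (j j' : Fin p) (d : List (Fin p)),
      ((s n ++ [j]) ++ d).set n j' = (s n ++ [j']) ++ d := by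
    intro j j' d
    simp [List.set_append, hlenn]
  have htake_le : ∀ (m : ℕ), m ≤ n → ∀ (j : Fin p),
      ((s n ++ [j]) ++ c).take m = (s n).take m := by
    intro m hm j
    rw [List.append_assoc, List.take_append_of_le_length (by omega)]
  have htake_gt : ∀ (m : ℕ), n < m → ∀ (j : Fin p),
      ((s n ++ [j]) ++ c).take m = (s n ++ [j]) ++ c.take (m - (n + 1)) := by
    intro m hm j
    rw [List.take_append,
      List.take_of_length_le (by simp [hlenn]; omega)]
    simp [hlenn]
  have hmain : ∑ m ∈ Finset.range i₀, (∑ j : Fin p,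
      if Relation.ReflTransGen Step (((s n ++ [j]) ++ c).take m) (s m)
          ∧ ((s n ++ [j]) ++ c)[m]? = some 0 then a m else 0) = a n := by
    rw [Finset.sum_eq_single n]
    · have htaken : ∀ j : Fin p, ((s n ++ [j]) ++ c).take n = s n := by
        intro j
        rw [htake_le n le_rfl, List.take_of_length_le hlenn.le]
      have hgetn : ∀ j : Fin p, ((s n ++ [j]) ++ c)[n]? = some j := by
        intro j
        rw [List.getElem?_append_left (by simp [hlenn]),
          List.getElem?_append_right (by omega)]
        simp [hlenn]
      have hterm : ∀ j : Fin p,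
          (if Relation.ReflTransGen Step (((s n ++ [j]) ++ c).take n) (s n)
            ∧ ((s n ++ [j]) ++ c)[n]? = some 0 then a n else 0)
          = if j = 0 then a n else 0 := by
        intro j
        rw [htaken, hgetn]
        simp [Relation.ReflTransGen.refl]
      rw [Finset.sum_congr rfl (fun j _ => hterm j)]
      simp
    · intro m hm hmn
      rcases lt_or_gt_of_ne hmn with hlt | hgt
      · -- m < n : summand independent of j
        have hconst : ∀ j : Fin p,
            (if Relation.ReflTransGen Step (((s n ++ [j]) ++ c).take m) (s m)
              ∧ ((s n ++ [j]) ++ c)[m]? = some 0 then a m else 0)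
            = (if Relation.ReflTransGen Step ((s n).take m) (s m)
              ∧ (s n)[m]? = some 0 then a m else 0) := by
          intro j
          have hg : ((s n ++ [j]) ++ c)[m]? = (s n)[m]? := by
            rw [List.getElem?_append_left (by simp [hlenn]; omega),
              List.getElem?_append_left (by rw [hlenn]; omega)]
          rw [htake_le m hlt.le, hg]
        rw [Finset.sum_congr rfl (fun j _ => hconst j), Finset.sum_const,
          Finset.card_univ, Fintype.card_fin, nsmul_eq_mul, hp0, zero_mul]
      · -- n < m : summand independent of j
        have hAtake : ∀ j : Fin p,
            ((s n ++ [j]) ++ c.take (m - (n + 1))).take n = s n := by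
          intro j
          rw [List.append_assoc, List.take_append_of_le_length (by omega),
            List.take_of_length_le hlenn.le]
        have hiff : ∀ j : Fin p,
            Relation.ReflTransGen Step ((s n ++ [j]) ++ c.take (m - (n + 1))) (s m)
            ↔ Relation.ReflTransGen Step ((s n ++ [(0 : Fin p)]) ++ c.take (m - (n + 1))) (s m) := by
          intro j
          constructor
          · intro h
            exact Relation.ReflTransGen.head ⟨n, j, hAtake 0, (hsetl 0 j _).symm⟩ h
          · intro h
            exact Relation.ReflTransGen.head ⟨n, 0, hAtake j, (hsetl j 0 _).symm⟩ h
        have hconst : ∀ j : Fin p,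
            (if Relation.ReflTransGen Step (((s n ++ [j]) ++ c).take m) (s m)
              ∧ ((s n ++ [j]) ++ c)[m]? = some 0 then a m else 0)
            = (if Relation.ReflTransGen Step (((s n ++ [(0 : Fin p)]) ++ c).take m) (s m)
              ∧ ((s n ++ [(0 : Fin p)]) ++ c)[m]? = some 0 then a m else 0) := by
          intro j
          have hg : ((s n ++ [j]) ++ c)[m]? = ((s n ++ [(0 : Fin p)]) ++ c)[m]? := by
            rw [List.getElem?_append_right (by simp [hlenn]; omega),
              List.getElem?_append_right (by simp [hlenn]; omega)]
            simp
          rw [htake_gt m hgt j, htake_gt m hgt 0, hg]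
          exact if_congr (and_congr_left' (hiff j)) rfl rfl
        rw [Finset.sum_congr rfl (fun j _ => hconst j), Finset.sum_const,
          Finset.card_univ, Fintype.card_fin, nsmul_eq_mul, hp0, zero_mul]
    · intro h
      exact absurd (Finset.mem_range.mpr hn) h
  rw [hmain]
  simp only [ha]
  ring
end
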